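/- arXiv:1703.01282 — 5 statements merged into one kernel-verified Lean document; each statement's English description precedes it below -/
import Mathlib

section
/- Let d ≥ 1 and let μ be an ergodic invariant random subgroup of G = ℤ^d ⋊ SL_d(ℤ) with μ({trivial subgroup}) = 0. Then there exists n ≥ 1 such that for μ-almost every H, the subgroup (nℤ)^d × {1} is contained in H; equivalently, H ∩ G_n = (nℤ)^d ⋊ K_H, where G_n = (nℤ)^d ⋊ Γ(n) and K_H ⊆ Γ(n) is the image of H ∩ G_n under the projection (v,M) ↦ M. -/
open MeasureTheory

/-- Linear automorphisms as additive automorphisms. -/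
def linToAddAut {R M : Type*} [Semiring R] [AddCommMonoid M] [Module R M] :
    (M ≃ₗ[R] M) →* Multiplicative (AddAut M) where
  toFun e := Multiplicative.ofAdd e.toAddEquiv
  map_one' := rfl
  map_mul' _ _ := rfl

/-- Additive automorphisms of `A` as multiplicative automorphisms of `Multiplicative A`. -/
def AddAut.toMultiplicativeHom (A : Type*) [AddGroup A] : Multiplicative (AddAut A) →* MulAut (Multiplicative A) where
  toFun e := AddEquiv.toMultiplicative (Multiplicative.toAdd e)
  map_one' := rfl
  map_mul' _ _ := rfl

/-- The standard action of `SL_d(ℤ)` on `ℤ^d`, as multiplicative automorphisms of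
`Multiplicative (ℤ^d)`. -/
noncomputable def phiZ (d : ℕ) :
    Matrix.SpecialLinearGroup (Fin d) ℤ →* MulAut (Multiplicative (Fin d → ℤ)) :=
  ((AddAut.toMultiplicativeHom (Fin d → ℤ)).comp linToAddAut).comp
    (Matrix.SpecialLinearGroup.toLin' (n := Fin d) (R := ℤ))

/-- The group `G = ℤ^d ⋊ SL_d(ℤ)`. -/
abbrev GZ (d : ℕ) :=
  Multiplicative (Fin d → ℤ) ⋊[phiZ d] Matrix.SpecialLinearGroup (Fin d) ℤ

/-- The σ-algebra on the space of subgroups of a countable discrete group, generated by the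
sets `{H : g ∈ H}`. -/
instance (d : ℕ) : MeasurableSpace (Subgroup (GZ d)) :=
  MeasurableSpace.generateFrom {s | ∃ g : GZ d, s = {H : Subgroup (GZ d) | g ∈ H}}

/-- The conjugation action on subgroups. -/
noncomputable def conjZ {d : ℕ} (g : GZ d) (H : Subgroup (GZ d)) : Subgroup (GZ d) :=
  H.comap (MulAut.conj g).toMonoidHom

/-- An invariant random subgroup of `ℤ^d ⋊ SL_d(ℤ)`. -/
def IsIRSZ {d : ℕ} (μ : Measure (Subgroup (GZ d))) : Prop :=
  IsProbabilityMeasure μ ∧ ∀ g : GZ d, μ.map (conjZ g) = μ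

/-- An ergodic invariant random subgroup of `ℤ^d ⋊ SL_d(ℤ)`. -/
def IsErgodicIRSZ {d : ℕ} (μ : Measure (Subgroup (GZ d))) : Prop :=
  IsIRSZ μ ∧ ∀ s : Set (Subgroup (GZ d)), MeasurableSet s →
    (∀ g : GZ d, conjZ g ⁻¹' s = s) → μ s = 0 ∨ μ s = 1

/-!
Write `L_H ≤ ℤ^d` for the translation part of `H`; conjugating `H` by `g` replaces `L_H` by
`g.right⁻¹ • L_H`. Two disjointness arguments show that almost surely `L_H` is nonzero and has
finite `SL_d(ℤ)`-orbit. If `L_H = 0` while `H` contains some `x` with nontrivial linear part `M`,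
conjugating by the translations `k • w` (with `M w ≠ w`) moves the event `{L_H = 0, x ∈ H}` to
pairwise disjoint events of the same measure; likewise the events `{L_H = L}` for `L` running
through an infinite orbit are pairwise disjoint conjugates of each other. A nonzero `L` with
finite orbit is stabilized by a nonzero power of every elementary transvection, which forces it
to contain a nonzero multiple of every basis vector, hence `(nℤ)^d` for some `n ≥ 1`. Ergodicity
then selects a single `n`.
-/

open scoped Pointwise Function

instance {α : Type*} [Countable α] : Countable (Multiplicative α) := ‹Countable α›

instance {n R : Type*} [Finite n] [Countable R] : Countable (Matrix n n R) :=
  inferInstanceAs (Countable (n → n → R))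

instance {n R : Type*} [Fintype n] [DecidableEq n] [CommRing R] [Countable R] :
    Countable (Matrix.SpecialLinearGroup n R) :=
  inferInstanceAs (Countable {A : Matrix n n R // A.det = 1})

instance {N G : Type*} [Group N] [Group G] {φ : G →* MulAut N} [Countable N] [Countable G] :
    Countable (N ⋊[φ] G) :=
  SemidirectProduct.equivProd.injective.countable

instance {A : Type*} [AddCommGroup A] [Countable A] [IsNoetherian ℤ A] :
    Countable (AddSubgroup A) :=
  have : Countable (Submodule ℤ A) :=
    Function.Surjective.countable (f := fun s : Finset A => Submodule.span ℤ (s : Set A))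
      fun N => IsNoetherian.noetherian N
  AddSubgroup.toIntSubmodule.injective.countable

namespace MeasureTheory

variable {α : Type*} [MeasurableSpace α] {μ : Measure α}

theorem eq_zero_of_pairwise_disjoint_of_measure_eq [IsFiniteMeasure μ] {s : ℕ → Set α}
    (hs : ∀ k, MeasurableSet (s k)) (hd : Pairwise (Disjoint on s)) {m : ENNReal}
    (hm : ∀ k, μ (s k) = m) : m = 0 := by
  by_contra h
  have htop : ∑' k, μ (s k) = ⊤ := by
    simp_rw [hm]
    exact ENNReal.tsum_const_eq_top_of_ne_zero h
  refine measure_ne_top μ Set.univ (top_le_iff.1 ?_)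
  rw [← htop]
  exact tsum_measure_le_measure_univ (fun k => (hs k).nullMeasurableSet)
    (hd.mono fun _ _ h => h.aedisjoint)

end MeasureTheory

namespace SemidirectProduct

variable {N G : Type*} [CommGroup N] [Group G] {φ : G →* MulAut N}

theorem mul_inl_mul_inv (g : N ⋊[φ] G) (n : N) : g * inl n * g⁻¹ = inl (φ g.right n) := by
  ext <;> simp [mul_comm]

theorem inl_mul_mul_inl_inv (a : N) (x : N ⋊[φ] G) :
    inl a * x * (inl a)⁻¹ = inl (a * (φ x.right a)⁻¹) * x := by
  ext <;> simp [mul_comm, mul_assoc]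

end SemidirectProduct

namespace Matrix.SpecialLinearGroup

variable {ι R : Type*} [Fintype ι] [DecidableEq ι] [CommRing R]

instance : FaithfulSMul (SpecialLinearGroup ι R) (ι → R) where
  eq_of_smul_eq_smul {M N} h := by
    ext i j
    simpa [SpecialLinearGroup.smul_def] using congrFun (h (Pi.single j 1)) i

theorem transvection_smul {i j : ι} (hij : i ≠ j) (t : R) (v : ι → R) :
    transvection hij t • v = v + Pi.single i (t * v j) := by
  simp [SpecialLinearGroup.smul_def, transvection_coe, add_mulVec, single_mulVec, Pi.single]

end Matrix.SpecialLinearGroup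

section IntegerLattices

open Matrix.SpecialLinearGroup MulAction

variable {ι : Type*} [Fintype ι] [DecidableEq ι] {L : AddSubgroup (ι → ℤ)}

theorem single_mem_of_transvection_smul_eq {i j : ι} (hij : i ≠ j) {t : ℤ}
    (ht : transvection hij t • L = L) {v : ι → ℤ} (hv : v ∈ L) :
    Pi.single i (t * v j) ∈ L := by
  have hTv : transvection hij t • v ∈ L := ht ▸ AddSubgroup.smul_mem_pointwise_smul v _ L hv
  rw [transvection_smul] at hTv
  simpa using L.sub_mem hTv hv

theorem exists_transvection_smul_eq_of_finite_orbit
    (hL : (orbit (Matrix.SpecialLinearGroup ι ℤ) L).Finite) {i j : ι} (hij : i ≠ j) :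
    ∃ t : ℤ, t ≠ 0 ∧ transvection hij t • L = L := by
  obtain ⟨a, b, hab, h⟩ := hL.exists_lt_map_eq_of_forall_mem
    (f := fun k : ℕ => transvection hij (k : ℤ) • L) fun k => mem_orbit L _
  refine ⟨(b : ℤ) - a, by omega, ?_⟩
  rw [← smul_left_cancel_iff (transvection hij (a : ℤ)), smul_smul, ← transvection_add]
  simpa using h.symm

theorem exists_single_mem_of_finite_orbit_of_ne
    (hL : (orbit (Matrix.SpecialLinearGroup ι ℤ) L).Finite) {i j : ι} (hij : i ≠ j)
    {v : ι → ℤ} (hv : v ∈ L) (hvj : v j ≠ 0) : ∃ b ≠ 0, Pi.single i b ∈ L := by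
  obtain ⟨t, ht0, ht⟩ := exists_transvection_smul_eq_of_finite_orbit hL hij
  exact ⟨t * v j, mul_ne_zero ht0 hvj, single_mem_of_transvection_smul_eq hij ht hv⟩

theorem exists_single_mem_of_finite_orbit (hL : (orbit (Matrix.SpecialLinearGroup ι ℤ) L).Finite)
    (hne : L ≠ ⊥) (k : ι) : ∃ b ≠ 0, Pi.single k b ∈ L := by
  obtain ⟨⟨v, hv⟩, hv0⟩ := AddSubgroup.ne_bot_iff_exists_ne_zero.1 hne
  obtain ⟨j, hvj⟩ : ∃ j, v j ≠ 0 := Function.ne_iff.1 fun h : v = 0 => hv0 (Subtype.ext h)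
  rcases eq_or_ne k j with rfl | hkj
  · by_cases hsub : ∃ i, i ≠ k
    · obtain ⟨i, hik⟩ := hsub
      obtain ⟨b, hb0, hbL⟩ := exists_single_mem_of_finite_orbit_of_ne hL hik hv hvj
      exact exists_single_mem_of_finite_orbit_of_ne hL hik.symm hbL (by simpa using hb0)
    · push Not at hsub
      refine ⟨v k, hvj, ?_⟩
      convert hv
      ext l
      simp [hsub l]
  · exact exists_single_mem_of_finite_orbit_of_ne hL hkj hv hvj

theorem exists_forall_dvd_mem_of_forall_single_mem (h : ∀ k, ∃ b ≠ 0, Pi.single k b ∈ L) :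
    ∃ n : ℕ, 0 < n ∧ ∀ v : ι → ℤ, (∀ i, (n : ℤ) ∣ v i) → v ∈ L := by
  choose b hb0 hbL using h
  refine ⟨(∏ k, b k).natAbs, Int.natAbs_pos.2 (Finset.prod_ne_zero_iff.2 fun k _ => hb0 k),
    fun v hv => ?_⟩
  rw [← Finset.univ_sum_single v]
  refine L.sum_mem fun k _ => ?_
  obtain ⟨a, ha⟩ : b k ∣ v k :=
    (Int.dvd_natAbs.2 (Finset.dvd_prod_of_mem b (Finset.mem_univ k))).trans (hv k)
  rw [ha, mul_comm, ← smul_eq_mul, Pi.single_smul']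
  exact L.zsmul_mem (hbL k) a

theorem exists_forall_dvd_mem_of_finite_orbit
    (hL : (orbit (Matrix.SpecialLinearGroup ι ℤ) L).Finite) (hne : L ≠ ⊥) :
    ∃ n : ℕ, 0 < n ∧ ∀ v : ι → ℤ, (∀ i, (n : ℤ) ∣ v i) → v ∈ L :=
  exists_forall_dvd_mem_of_forall_single_mem (exists_single_mem_of_finite_orbit hL hne)

theorem dvd_smul_apply_of_forall_dvd {n : ℤ} (M : Matrix.SpecialLinearGroup ι ℤ)
    {v : ι → ℤ} (hv : ∀ i, n ∣ v i) (i : ι) : n ∣ (M • v) i :=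
  Finset.dvd_sum fun j _ => dvd_mul_of_dvd_right (hv j) _

theorem forall_dvd_mem_smul {n : ℤ} (M : Matrix.SpecialLinearGroup ι ℤ)
    (hL : ∀ v : ι → ℤ, (∀ i, n ∣ v i) → v ∈ L) :
    ∀ v : ι → ℤ, (∀ i, n ∣ v i) → v ∈ M • L := fun _ hv =>
  AddSubgroup.mem_pointwise_smul_iff_inv_smul_mem.2 (hL _ (dvd_smul_apply_of_forall_dvd M⁻¹ hv))

end IntegerLattices

section TranslationPart

open MulAction SemidirectProduct

variable {d : ℕ}

noncomputable def translationPart (H : Subgroup (GZ d)) : AddSubgroup (Fin d → ℤ) :=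
  Subgroup.toAddSubgroup' (H.comap inl)

@[simp]
theorem mem_translationPart {H : Subgroup (GZ d)} {v : Fin d → ℤ} :
    v ∈ translationPart H ↔ inl (Multiplicative.ofAdd v) ∈ H :=
  Iff.rfl

@[simp]
theorem mem_conjZ {g x : GZ d} {H : Subgroup (GZ d)} : x ∈ conjZ g H ↔ g * x * g⁻¹ ∈ H :=
  Iff.rfl

theorem translationPart_conjZ (g : GZ d) (H : Subgroup (GZ d)) :
    translationPart (conjZ g H) = g.right⁻¹ • translationPart H := by
  ext v
  rw [AddSubgroup.mem_inv_pointwise_smul_iff, mem_translationPart, mem_conjZ, mul_inl_mul_inv]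
  rfl

theorem conjZ_preimage_translationPart_preimage (g : GZ d) {P : Set (AddSubgroup (Fin d → ℤ))}
    (hP : ∀ M : Matrix.SpecialLinearGroup (Fin d) ℤ, ∀ L ∈ P, M • L ∈ P) :
    conjZ g ⁻¹' (translationPart ⁻¹' P) = translationPart ⁻¹' P := by
  ext H
  simp only [Set.mem_preimage, translationPart_conjZ]
  exact ⟨fun h => by simpa using hP g.right _ h, hP _ _⟩

theorem measurableSet_setOf_mem (x : GZ d) : MeasurableSet {H : Subgroup (GZ d) | x ∈ H} :=
  MeasurableSpace.measurableSet_generateFrom ⟨x, rfl⟩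

theorem measurable_conjZ (g : GZ d) : Measurable (conjZ g) :=
  measurable_generateFrom fun _ ⟨x, hx⟩ => hx ▸ measurableSet_setOf_mem (g * x * g⁻¹)

theorem measurableSet_translationPart_eq (L : AddSubgroup (Fin d → ℤ)) :
    MeasurableSet {H : Subgroup (GZ d) | translationPart H = L} := by
  simp_rw [SetLike.ext_iff, Set.ofPred_forall]
  refine MeasurableSet.iInter fun v => ?_
  by_cases hv : v ∈ L
  · simp only [hv, iff_true]
    exact measurableSet_setOf_mem _
  · simp only [hv, iff_false]
    exact (measurableSet_setOf_mem _).compl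

theorem measurableSet_translationPart_preimage (P : Set (AddSubgroup (Fin d → ℤ))) :
    MeasurableSet (translationPart ⁻¹' P : Set (Subgroup (GZ d))) := by
  rw [← Set.biUnion_preimage_singleton]
  exact MeasurableSet.biUnion P.to_countable fun L _ => measurableSet_translationPart_eq L

end TranslationPart

namespace IsIRSZ

open MulAction SemidirectProduct

variable {d : ℕ} {μ : Measure (Subgroup (GZ d))}

theorem measure_preimage_conjZ (hμ : IsIRSZ μ) (g : GZ d) {s : Set (Subgroup (GZ d))}
    (hs : MeasurableSet s) : μ (conjZ g ⁻¹' s) = μ s := by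
  conv_rhs => rw [← hμ.2 g, Measure.map_apply (measurable_conjZ g) hs]

theorem measure_eq_zero_of_pairwise_disjoint (hμ : IsIRSZ μ) {s : Set (Subgroup (GZ d))}
    (hs : MeasurableSet s) (g : ℕ → GZ d)
    (hg : Pairwise (Disjoint on fun k => conjZ (g k) ⁻¹' s)) : μ s = 0 :=
  have := hμ.1
  eq_zero_of_pairwise_disjoint_of_measure_eq (fun k => measurable_conjZ (g k) hs) hg
    fun k => hμ.measure_preimage_conjZ (g k) hs

theorem measure_translationPart_eq_zero_of_infinite_orbit (hμ : IsIRSZ μ)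
    {L : AddSubgroup (Fin d → ℤ)}
    (hL : (orbit (Matrix.SpecialLinearGroup (Fin d) ℤ) L).Infinite) :
    μ {H | translationPart H = L} = 0 := by
  choose M hM using fun k => mem_orbit_iff.1 (hL.natEmbedding _ k).2
  refine hμ.measure_eq_zero_of_pairwise_disjoint (measurableSet_translationPart_eq L)
    (fun k => inr (M k)) fun k l hkl => Set.disjoint_left.2 fun H hk hl => hkl ?_
  simp only [Set.mem_preimage, Set.mem_ofPred_eq, translationPart_conjZ, right_inr] at hk hl
  refine (hL.natEmbedding _).injective (Subtype.ext ?_)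
  rw [← hM, ← hM, ← inv_smul_eq_iff.1 hk, ← inv_smul_eq_iff.1 hl]

theorem ae_finite_orbit_translationPart (hμ : IsIRSZ μ) :
    ∀ᵐ H ∂μ, (orbit (Matrix.SpecialLinearGroup (Fin d) ℤ) (translationPart H)).Finite := by
  rw [ae_iff]
  change μ (translationPart ⁻¹' {L | ¬ (orbit _ L).Finite}) = 0
  rw [← Set.biUnion_preimage_singleton, measure_biUnion_null_iff (Set.to_countable _)]
  exact fun L hL => hμ.measure_translationPart_eq_zero_of_infinite_orbit hL

theorem measure_translationPart_eq_bot_and_mem_eq_zero (hμ : IsIRSZ μ) {x : GZ d}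
    (hx : x.right ≠ 1) : μ {H | translationPart H = ⊥ ∧ x ∈ H} = 0 := by
  obtain ⟨w, hw⟩ : ∃ w : Fin d → ℤ, x.right • w ≠ w := by
    by_contra! h
    exact hx (eq_of_smul_eq_smul fun v => (h v).trans (one_smul _ v).symm)
  have hs : MeasurableSet {H : Subgroup (GZ d) | translationPart H = ⊥ ∧ x ∈ H} :=
    (measurableSet_translationPart_eq ⊥).inter (measurableSet_setOf_mem x)
  refine hμ.measure_eq_zero_of_pairwise_disjoint hs
    (fun k => inl (Multiplicative.ofAdd ((k : ℤ) • w))) fun k l hkl => Set.disjoint_left.2 ?_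
  rintro H ⟨hbot, hk⟩ ⟨-, hl⟩
  simp only [translationPart_conjZ, right_inl, inv_one, one_smul] at hbot
  simp only [mem_conjZ, inl_mul_mul_inl_inv] at hk hl
  have hmem : ((l : ℤ) - k) • (x.right • w - w) ∈ translationPart H := by
    have := H.mul_mem hk (H.inv_mem hl)
    simp only [mul_inv_rev, mul_assoc, mul_inv_cancel_left, ← map_inv, ← map_mul] at this
    rw [mem_translationPart]
    convert this using 2
    apply Multiplicative.toAdd.injective
    change (l - k : ℤ) • (x.right • w - w) = (k : ℤ) • w +
      (x.right • -((k : ℤ) • w) + (x.right • - -((l : ℤ) • w) + -((l : ℤ) • w)))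
    rw [neg_neg, smul_neg, smul_comm x.right (k : ℤ), smul_comm x.right (l : ℤ)]
    generalize x.right • w = Mw
    module
  rw [hbot, AddSubgroup.mem_bot, smul_eq_zero, sub_eq_zero, sub_eq_zero] at hmem
  exact hmem.elim (fun h => hkl (by exact_mod_cast h.symm)) hw

theorem ae_translationPart_ne_bot (hμ : IsIRSZ μ) (hnontriv : μ {H | H = ⊥} = 0) :
    ∀ᵐ H ∂μ, translationPart H ≠ ⊥ := by
  have hcover : {H | translationPart H = ⊥} ⊆ {H | H = ⊥} ∪
      ⋃ x : {x : GZ d // x.right ≠ 1}, {H | translationPart H = ⊥ ∧ x.1 ∈ H} := by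
    intro H (hH : translationPart H = ⊥)
    obtain hbot | ⟨x, hxH, hx1⟩ := H.bot_or_exists_ne_one
    · exact Or.inl hbot
    refine Or.inr (Set.mem_iUnion.2 ⟨⟨x, fun hx => hx1 ?_⟩, hH, hxH⟩)
    have hleft : Multiplicative.toAdd x.left ∈ translationPart H := by
      rwa [mem_translationPart, ofAdd_toAdd,
        show inl x.left = x from SemidirectProduct.ext rfl hx.symm]
    rw [hH, AddSubgroup.mem_bot, toAdd_eq_zero] at hleft
    exact SemidirectProduct.ext hleft hx
  simpa only [ae_iff, not_not] using measure_mono_null hcover <| measure_union_null hnontriv <|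
    measure_iUnion_null fun x => hμ.measure_translationPart_eq_bot_and_mem_eq_zero x.2

end IsIRSZ

theorem IsErgodicIRSZ.exists_ae_mem {d : ℕ} {μ : Measure (Subgroup (GZ d))} {ι : Type*}
    [Countable ι] (hμ : IsErgodicIRSZ μ) {E : ι → Set (Subgroup (GZ d))}
    (hE : ∀ i, MeasurableSet (E i)) (hinv : ∀ i g, conjZ g ⁻¹' E i = E i)
    (h : ∀ᵐ H ∂μ, ∃ i, H ∈ E i) : ∃ i, ∀ᵐ H ∂μ, H ∈ E i := by
  have := hμ.1.1
  by_contra hne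
  have hnull (i : ι) : μ (E i) = 0 := (hμ.2 _ (hE i) (hinv i)).resolve_right fun h1 =>
    hne ⟨i, (ae_mem_iff_measure_eq (hE i).nullMeasurableSet).2 (by rw [h1, measure_univ])⟩
  have hout : ∀ᵐ H ∂μ, ∀ i, H ∉ E i :=
    ae_all_iff.2 fun i => measure_eq_zero_iff_ae_notMem.1 (hnull i)
  obtain ⟨H, ⟨i, hi⟩, hH⟩ := (h.and hout).exists
  exact hH i hi

theorem ergodic_irs_of_integral_special_affine_group_general
    {d : ℕ} (μ : Measure (Subgroup (GZ d)))
    (hirs : IsErgodicIRSZ μ) (hnontriv : μ {H : Subgroup (GZ d) | H = ⊥} = 0) :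
    ∃ n : ℕ, 1 ≤ n ∧ ∀ᵐ H ∂μ, ∀ v : Fin d → ℤ, (∀ i, (n : ℤ) ∣ v i) →
      (SemidirectProduct.inl (Multiplicative.ofAdd v) : GZ d) ∈ H := by
  let P (n : ℕ) : Set (AddSubgroup (Fin d → ℤ)) :=
    {L | ∀ v, (∀ i, (n : ℤ) ∣ v i) → v ∈ L}
  let E (n : {n : ℕ // 0 < n}) : Set (Subgroup (GZ d)) := translationPart ⁻¹' P n
  have hae : ∀ᵐ H ∂μ, ∃ n, H ∈ E n := by
    filter_upwards [hirs.1.ae_translationPart_ne_bot hnontriv,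
      hirs.1.ae_finite_orbit_translationPart] with H hne hfin
    obtain ⟨n, hn, hH⟩ := exists_forall_dvd_mem_of_finite_orbit hfin hne
    exact ⟨⟨n, hn⟩, hH⟩
  obtain ⟨⟨n, hn⟩, hE⟩ := hirs.exists_ae_mem (E := E)
    (fun n => measurableSet_translationPart_preimage (P n))
    (fun n g => conjZ_preimage_translationPart_preimage g fun M _ => forall_dvd_mem_smul M) hae
  exact ⟨n, hn, hE⟩

/-- **IRSs of `ℤ^d ⋊ SL_d(ℤ)`.**  If `μ` is a nontrivial ergodic IRS of
`G = ℤ^d ⋊ SL_d(ℤ)`, then there is `n ≥ 1` such that almost every `H` contains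
`(nℤ)^d × {1}`; equivalently, `H ∩ G_n` is of the form `(nℤ)^d ⋊ K` with
`K = pr (H ∩ G_n) ≤ Γ(n)`. -/
theorem ergodic_irs_of_integral_special_affine_group
    {d : ℕ} (hd : 1 ≤ d) (μ : Measure (Subgroup (GZ d)))
    (hirs : IsErgodicIRSZ μ) (hnontriv : μ {H : Subgroup (GZ d) | H = ⊥} = 0) :
    ∃ n : ℕ, 1 ≤ n ∧ ∀ᵐ H ∂μ, ∀ v : Fin d → ℤ, (∀ i, (n : ℤ) ∣ v i) →
      (SemidirectProduct.inl (Multiplicative.ofAdd v) : GZ d) ∈ H :=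
  ergodic_irs_of_integral_special_affine_group_general μ hirs hnontriv
end

section
/- Let G be a locally compact second countable group with left Haar measure ν, and let Z be a group of automorphisms of G that are also homeomorphisms of G (each A ∈ Z induces a map H ↦ A(H) on Sub_G). Suppose μ is a nonzero finite Borel measure on Sub_G that is invariant under the induced action of every A ∈ Z, and that μ-almost every H ∈ Sub_G is a lattice in G (a discrete subgroup admitting a Borel fundamental domain of finite ν-measure for its left-translation action on G). Then A_*ν = ν for every A ∈ Z. -/
/-!
Uniqueness of Haar measure gives `A_*ν = c • ν` with `0 < c < ∞`, so `A` multiplies the covolume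
of every lattice by `c⁻¹`. Replacing `A` by `A⁻¹` if necessary, suppose `A` strictly shrinks
covolumes. Since almost every `H` is discrete, `μ` charges the set of subgroups meeting some compact
identity neighbourhood `N` only in `1`, and Poincaré recurrence for the finite `A`-invariant measure
`μ` yields a lattice `H` whose images `Aⁿ(H)` return to this set infinitely often. Their covolumes
tend to `0`, yet a subgroup meeting `V * V⁻¹ ⊆ N` only in `1` has pairwise disjoint `V`-translates,
hence covolume at least `ν V > 0`.
-/

open MeasureTheory

/-- The space of closed subgroups of a topological group `G`. -/
def SubG (G : Type*) [Group G] [TopologicalSpace G] : Type _ :=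
  {H : Subgroup G // IsClosed (H : Set G)}

variable {G : Type*} [Group G] [TopologicalSpace G]

/-- The Chabauty topology on the space of closed subgroups. -/
instance : TopologicalSpace (SubG G) :=
  TopologicalSpace.generateFrom
    ({S | ∃ U : Set G, IsOpen U ∧ S = {H : SubG G | ((H.1 : Set G) ∩ U).Nonempty}} ∪
     {S | ∃ K : Set G, IsCompact K ∧ S = {H : SubG G | (H.1 : Set G) ∩ K = ∅}})

instance : MeasurableSpace (SubG G) := borel (SubG G)

/-- The map on `SubG G` induced by an automorphism of `G` which is a homeomorphism:
`H ↦ A(H)`. -/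
def autSub (A : G ≃* G) (hc : Continuous A.symm) (H : SubG G) : SubG G :=
  ⟨H.1.comap A.symm.toMonoidHom, by
    have hs : ((H.1.comap A.symm.toMonoidHom : Subgroup G) : Set G)
        = ⇑A.symm ⁻¹' (H.1 : Set G) := rfl
    rw [hs]; exact H.2.preimage hc⟩

open Set Filter Topology
open scoped ENNReal Pointwise

theorem MeasureTheory.MeasurePreserving.exists_forall_iterate_and_frequently_mem {α : Type*}
    [MeasurableSpace α] {μ : Measure α} [IsFiniteMeasure μ] {T : α → α}
    (hT : MeasurePreserving T μ μ) {s : Set α} (hs : MeasurableSet s) (hμs : μ s ≠ 0)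
    {p : α → Prop} (hp : ∀ᵐ x ∂μ, p x) :
    ∃ x, (∀ n, p (T^[n] x)) ∧ ∃ᶠ n in atTop, T^[n] x ∈ s := by
  have horbit : ∀ᵐ x ∂μ, ∀ n, p (T^[n] x) :=
    ae_all_iff.mpr fun n => (hT.iterate n).quasiMeasurePreserving.ae hp
  have hrec := hT.conservative.ae_mem_imp_frequently_image_mem hs.nullMeasurableSet
  have : (ae (μ.restrict s)).NeBot := ae_restrict_neBot.mpr hμs
  obtain ⟨x, hxs, hx, hxrec⟩ :=
    ((ae_restrict_mem hs).and (ae_restrict_of_ae (horbit.and hrec))).exists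
  exact ⟨x, hx, hxrec hxs⟩

theorem MeasureTheory.Measure.map_symm_eq_inv_smul {α : Type*} [MeasurableSpace α]
    {ν : Measure α} {e : α ≃ α} (he : Measurable e) (he' : Measurable e.symm) {c : ℝ≥0∞}
    (hc0 : c ≠ 0) (hc : c ≠ ∞) (h : ν.map e = c • ν) : ν.map e.symm = c⁻¹ • ν :=
  calc ν.map e.symm = c⁻¹ • (c • ν).map e.symm := by
        rw [Measure.map_smul, smul_smul, ENNReal.inv_mul_cancel hc0 hc, one_smul]
    _ = c⁻¹ • ν := by rw [← h, Measure.map_map he' he, e.symm_comp_self, Measure.map_id]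

theorem MeasureTheory.IsFundamentalDomain.comap_symm {K : Type*} [Group K] [MeasurableSpace K]
    {ν : Measure K} (B : K ≃* K)
    (hB : Measure.QuasiMeasurePreserving B.symm ν ν) {H : Subgroup K} {F : Set K}
    (hF : IsFundamentalDomain H F ν) :
    IsFundamentalDomain (H.comap B.symm.toMonoidHom) (B.symm ⁻¹' F) ν :=
  hF.preimage_of_equiv hB (e := fun γ => ⟨B γ, by simp⟩)
    ⟨fun _ _ h => Subtype.ext (B.injective (congrArg Subtype.val h)),
      fun γ => ⟨⟨B.symm γ, γ.2⟩, Subtype.ext (B.apply_symm_apply γ)⟩⟩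
    fun γ x => show B.symm (B γ * x) = γ * B.symm x by simp

instance : BorelSpace (SubG G) := ⟨rfl⟩

namespace SubG

theorem isOpen_setOf_inter_nonempty {U : Set G} (hU : IsOpen U) :
    IsOpen {H : SubG G | ((H.1 : Set G) ∩ U).Nonempty} :=
  TopologicalSpace.isOpen_generateFrom_of_mem (Or.inl ⟨U, hU, rfl⟩)

theorem isOpen_setOf_inter_eq_empty {K : Set G} (hK : IsCompact K) :
    IsOpen {H : SubG G | (H.1 : Set G) ∩ K = ∅} :=
  TopologicalSpace.isOpen_generateFrom_of_mem (Or.inr ⟨K, hK, rfl⟩)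

def meetTrivially (N : Set G) : Set (SubG G) := {H | (H.1 : Set G) ∩ N ⊆ {1}}

theorem measurableSet_meetTrivially [T1Space G] [SecondCountableTopology G] {N : Set G}
    (hN : IsCompact N) : MeasurableSet (meetTrivially N) := by
  have hbasis := TopologicalSpace.isBasis_countableBasis G
  have : meetTrivially N = ⋂ W ∈ {W ∈ TopologicalSpace.countableBasis G | (1 : G) ∈ W},
      {H : SubG G | (H.1 : Set G) ∩ (N \ W) = ∅} := by
    ext H
    simp only [meetTrivially, mem_iInter, mem_ofPred_eq, eq_empty_iff_forall_notMem]
    refine ⟨fun h W ⟨_, h1W⟩ x ⟨hxH, hxN, hxW⟩ => hxW ?_, fun h x hx => ?_⟩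
    · rwa [h ⟨hxH, hxN⟩]
    · by_contra hx1
      obtain ⟨W, hW, h1W, hWx⟩ :=
        hbasis.exists_subset_of_mem_open (Ne.symm hx1) isOpen_compl_singleton
      exact h W ⟨hW, h1W⟩ x ⟨hx.1, hx.2, fun hxW => hWx hxW rfl⟩
  rw [this]
  exact .biInter ((TopologicalSpace.countable_countableBasis G).mono (sep_subset _ _))
    fun W hW => (isOpen_setOf_inter_eq_empty (hN.diff (hbasis.isOpen hW.1))).measurableSet

end SubG

theorem coe_autSub (A : G ≃* G) (hc : Continuous A.symm) (H : SubG G) :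
    ((autSub A hc H).1 : Set G) = A.symm ⁻¹' (H.1 : Set G) := rfl

theorem continuous_autSub {A : G ≃* G} (hA : Continuous A) (hA' : Continuous A.symm) :
    Continuous (autSub A hA') := by
  refine continuous_generateFrom_iff.mpr ?_
  rintro S (⟨U, hU, rfl⟩ | ⟨K, hK, rfl⟩)
  · have hAU : A.symm '' U = A ⁻¹' U := A.toEquiv.image_symm_eq_preimage U
    convert SubG.isOpen_setOf_inter_nonempty (hU.preimage hA) using 1
    ext H
    rw [mem_preimage, mem_ofPred_eq, mem_ofPred_eq, coe_autSub, inter_comm,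
      ← image_inter_nonempty_iff, inter_comm, hAU]
  · convert SubG.isOpen_setOf_inter_eq_empty (hK.image hA') using 1
    ext H
    rw [mem_preimage, mem_ofPred_eq, mem_ofPred_eq, coe_autSub, ← not_nonempty_iff_eq_empty,
      ← not_nonempty_iff_eq_empty, not_iff_not, inter_comm, ← image_inter_nonempty_iff,
      inter_comm]

theorem autSub_symm_autSub (A : G ≃* G) (hA : Continuous A) (hA' : Continuous A.symm)
    (H : SubG G) : autSub A.symm hA (autSub A hA' H) = H :=
  Subtype.ext <| Subgroup.ext fun x => by simp [autSub]

theorem map_autSub_symm {A : G ≃* G} (hA : Continuous A) (hA' : Continuous A.symm)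
    {μ : Measure (SubG G)} (hμ : μ.map (autSub A hA') = μ) :
    μ.map (autSub A.symm hA) = μ := by
  conv_lhs => rw [← hμ]
  rw [Measure.map_map (continuous_autSub hA' hA).measurable
    (continuous_autSub hA hA').measurable]
  simp [Function.comp_def, autSub_symm_autSub]

section DiscreteSubgroup

variable [IsTopologicalGroup G]

theorem t1Space_of_discreteTopology_subgroup (H : Subgroup G) (hH : IsClosed (H : Set G))
    [DiscreteTopology H] : T1Space G := by
  refine IsTopologicalGroup.t1Space G (closure_subset_iff_isClosed.mp fun z hz => ?_)
  have hzH : z ∈ H := closure_minimal (singleton_subset_iff.mpr H.one_mem) hH hz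
  have : Inseparable (⟨z, hzH⟩ : H) 1 := by
    rw [← Topology.IsInducing.subtypeVal.inseparable_iff, group_inseparable_iff]
    simpa [← singleton_one] using hz
  exact congrArg Subtype.val this.eq

theorem exists_mem_countableBasis_inter_closure_subset_one [LocallyCompactSpace G]
    [SecondCountableTopology G] (H : Subgroup G) [DiscreteTopology H] :
    ∃ W ∈ TopologicalSpace.countableBasis G, (1 : G) ∈ W ∧ IsCompact (closure W) ∧
      (H : Set G) ∩ closure W ⊆ {1} := by
  obtain ⟨U, hUo, hU⟩ := isOpen_induced_iff.mp (isOpen_discrete {(1 : H)})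
  have h1U : (1 : G) ∈ U := by
    simpa using (Set.ext_iff.mp hU 1).mpr rfl
  obtain ⟨K, hK, h1K, hKU⟩ := exists_compact_subset hUo h1U
  obtain ⟨C, hC, hCc, hCK⟩ := exists_mem_nhds_isClosed_subset (isOpen_interior.mem_nhds h1K)
  obtain ⟨W, hW, h1W, hWC⟩ :=
    (TopologicalSpace.isBasis_countableBasis G).mem_nhds_iff.mp hC
  have hWK : closure W ⊆ K := (closure_minimal hWC hCc).trans (hCK.trans interior_subset)
  refine ⟨W, hW, h1W, hK.of_isClosed_subset isClosed_closure hWK, fun x ⟨hxH, hxW⟩ => ?_⟩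
  have : (⟨x, hxH⟩ : H) ∈ Subtype.val ⁻¹' U := hKU (hWK hxW)
  rw [hU] at this
  simpa using congrArg Subtype.val this

end DiscreteSubgroup

theorem SubG.exists_measure_meetTrivially_ne_zero [IsTopologicalGroup G] [LocallyCompactSpace G]
    [SecondCountableTopology G] {μ : Measure (SubG G)} (hμ : μ ≠ 0)
    (hdisc : ∀ᵐ H ∂μ, DiscreteTopology H.1) :
    ∃ N ∈ 𝓝 (1 : G), IsCompact N ∧ μ (meetTrivially N) ≠ 0 := by
  set 𝒲 := {W ∈ TopologicalSpace.countableBasis G | (1 : G) ∈ W ∧ IsCompact (closure W)}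
  by_contra! h
  have hnull : μ (⋃ W ∈ 𝒲, meetTrivially (closure W)) = 0 :=
    (measure_biUnion_null_iff ((TopologicalSpace.countable_countableBasis G).mono
      (sep_subset _ _))).mpr fun W hW => h _ (mem_of_superset
        ((TopologicalSpace.isOpen_of_mem_countableBasis hW.1).mem_nhds hW.2.1) subset_closure)
        hW.2.2
  have hcover : ∀ᵐ H ∂μ, H ∈ ⋃ W ∈ 𝒲, meetTrivially (closure W) := by
    filter_upwards [hdisc] with H hH
    obtain ⟨W, hW, h1W, hWc, hHW⟩ := exists_mem_countableBasis_inter_closure_subset_one H.1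
    exact mem_biUnion ⟨hW, h1W, hWc⟩ hHW
  refine hμ (ae_eq_bot.mp (eventually_false_iff_eq_bot.mp ?_))
  filter_upwards [measure_eq_zero_iff_ae_notMem.mp hnull, hcover] with H hH hH'
  exact hH hH'

section Haar

variable [IsTopologicalGroup G] [MeasurableSpace G] [BorelSpace G]

theorem measure_le_of_isFundamentalDomain (ν : Measure G) [ν.IsMulLeftInvariant]
    {H : Subgroup G} [Countable H] {F V : Set G} (hF : IsFundamentalDomain H F ν)
    (hV : MeasurableSet V) (hHV : (H : Set G) ∩ (V * V⁻¹) ⊆ {1}) : ν V ≤ ν F := by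
  by_contra! hlt
  obtain ⟨x, hx, y, hy, γ, hγ1, hγ⟩ := hF.exists_ne_one_smul_eq hV.nullMeasurableSet hlt
  have hγ' : (γ : G) = y * x⁻¹ := by
    rw [← hγ, Subgroup.smul_def, smul_eq_mul, mul_inv_cancel_right]
  exact hγ1 (Subtype.ext (hHV ⟨γ.2, hγ' ▸ mul_mem_mul hy (inv_mem_inv.mpr hx)⟩))

theorem measure_isFundamentalDomain_autSub_eq_mul (ν : Measure G) [ν.IsMulLeftInvariant]
    {B : G ≃* G} (hB' : Continuous B.symm) {c : ℝ≥0∞} (hBν : ν.map B.symm = c • ν)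
    {H : SubG G} [Countable (autSub B hB' H).1] {F F' : Set G} (hFm : MeasurableSet F)
    (hF : IsFundamentalDomain H.1 F ν) (hF' : IsFundamentalDomain (autSub B hB' H).1 F' ν) :
    ν F' = c * ν F := by
  have hq : Measure.QuasiMeasurePreserving B.symm ν ν :=
    ⟨hB'.measurable, hBν ▸ Measure.smul_absolutelyContinuous⟩
  rw [hF'.measure_eq (hF.comap_symm B hq),
    ← Measure.map_apply hB'.measurable hFm, hBν, Measure.smul_apply, smul_eq_mul]

theorem measure_isFundamentalDomain_iterate_autSub_eq_pow_mul (ν : Measure G) [ν.IsMulLeftInvariant]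
    {B : G ≃* G} (hB' : Continuous B.symm) {c : ℝ≥0∞} (hBν : ν.map B.symm = c • ν)
    {H : SubG G} (hcount : ∀ n, Countable ((autSub B hB')^[n] H).1) {F : ℕ → Set G}
    (hFm : ∀ n, MeasurableSet (F n))
    (hF : ∀ n, IsFundamentalDomain ((autSub B hB')^[n] H).1 (F n) ν)
    (n : ℕ) : ν (F n) = c ^ n * ν (F 0) := by
  induction n with
  | zero => rw [pow_zero, one_mul]
  | succ n ih =>
    have hF' := hF (n + 1)
    have := hcount (n + 1)
    rw [Function.iterate_succ_apply'] at hF' this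
    rw [measure_isFundamentalDomain_autSub_eq_mul ν hB' hBν (hFm n) (hF n) hF', ih, ← mul_assoc,
      ← pow_succ']

end Haar

theorem one_le_of_map_symm_eq_smul [IsTopologicalGroup G] [LocallyCompactSpace G]
    [SecondCountableTopology G] [MeasurableSpace G] [BorelSpace G]
    (ν : Measure G) [ν.IsHaarMeasure] {μ : Measure (SubG G)} [IsFiniteMeasure μ] (hμ : μ ≠ 0)
    {B : G ≃* G} (hB : Continuous B) (hB' : Continuous B.symm)
    (hinv : μ.map (autSub B hB') = μ)
    (hlat : ∀ᵐ H ∂μ, DiscreteTopology H.1 ∧ ∃ F : Set G, MeasurableSet F ∧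
      IsFundamentalDomain H.1 F ν ∧ ν F ≠ ⊤)
    {c : ℝ≥0∞} (hBν : ν.map B.symm = c • ν) : 1 ≤ c := by
  by_contra! hc
  have : T1Space G := by
    have := ae_neBot.mpr hμ
    obtain ⟨H, hH, -⟩ := hlat.exists
    exact t1Space_of_discreteTopology_subgroup H.1 H.2
  obtain ⟨N, hN1, hNc, hμN⟩ :=
    SubG.exists_measure_meetTrivially_ne_zero hμ (hlat.mono fun _ h => h.1)
  obtain ⟨V, hV1, hVc, hVinv, hVN⟩ := exists_closed_nhds_one_inv_eq_mul_subset hN1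
  have hT : MeasurePreserving (autSub B hB') μ μ := ⟨(continuous_autSub hB hB').measurable, hinv⟩
  obtain ⟨H, hlatH, hfreq⟩ := hT.exists_forall_iterate_and_frequently_mem
    (SubG.measurableSet_meetTrivially hNc) hμN hlat
  set T := autSub B hB'
  choose hdisc F hFm hF hFfin using hlatH
  have hcount (n : ℕ) : Countable (T^[n] H).1 :=
    have := hdisc n
    TopologicalSpace.separableSpace_iff_countable.mp inferInstance
  have hcovol := measure_isFundamentalDomain_iterate_autSub_eq_pow_mul ν hB' hBν hcount hFm hF
  have hlow (n : ℕ) (hn : T^[n] H ∈ SubG.meetTrivially N) : ν V ≤ ν (F n) :=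
    have := hcount n
    measure_le_of_isFundamentalDomain ν (hF n) hVc.measurableSet
      (by rw [hVinv]; exact (inter_subset_inter_right _ hVN).trans hn)
  have hsmall : ∀ᶠ n in atTop, ν (F n) < ν V := by
    have htend : Tendsto (fun n => c ^ n * ν (F 0)) atTop (𝓝 0) := by
      simpa using ENNReal.Tendsto.mul_const (ENNReal.tendsto_pow_atTop_nhds_zero_of_lt_one hc)
        (Or.inr (hFfin 0))
    filter_upwards [htend.eventually_lt_const (Measure.measure_pos_of_mem_nhds ν hV1)] with n hn
    rwa [hcovol]
  obtain ⟨n, hn, hn'⟩ := (hfreq.and_eventually hsmall).exists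
  exact (hlow n hn).not_gt hn'

/-- **Automorphisms preserving a measure on lattices preserve Haar measure.**
Let `G` be a locally compact second countable group with Haar measure `ν`, and let `A` be a
bicontinuous automorphism of `G`.  If a nonzero finite Borel measure `μ` on the Chabauty
space of closed subgroups of `G` is invariant under the map `H ↦ A(H)` and almost every `H`
is a lattice in `G`, then `A` preserves the Haar measure: `A_*ν = ν`. -/
theorem aut_preserving_lattice_measure_preserves_haar
    [IsTopologicalGroup G] [LocallyCompactSpace G] [SecondCountableTopology G]
    [MeasurableSpace G] [BorelSpace G]
    (ν : Measure G) (hν : ν.IsHaarMeasure)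
    (μ : Measure (SubG G)) (hfin : IsFiniteMeasure μ) (hne : μ ≠ 0)
    (A : G ≃* G) (hA : Continuous A) (hA' : Continuous A.symm)
    (hinv : μ.map (autSub A hA') = μ)
    (hlat : ∀ᵐ H ∂μ, DiscreteTopology H.1 ∧ ∃ F : Set G, MeasurableSet F ∧
      IsFundamentalDomain H.1 F ν ∧ ν F ≠ ⊤) :
    ν.map A = ν := by
  have : (ν.map A).IsHaarMeasure := MulEquiv.isHaarMeasure_map (μ := ν) A hA hA'
  set c : ℝ≥0∞ := (Measure.haarScalarFactor (ν.map A) ν : ℝ≥0∞)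
  have hc : ν.map A = c • ν := by
    rw [Measure.isMulLeftInvariant_eq_smul (ν.map A) ν, ENNReal.smul_def]
  have hc0 : c ≠ 0 :=
    ENNReal.coe_ne_zero.mpr (Measure.haarScalarFactor_pos_of_isHaarMeasure _ _).ne'
  have h1c : 1 ≤ c := one_le_of_map_symm_eq_smul ν hne hA' hA (map_autSub_symm hA hA' hinv) hlat hc
  have hc1 : 1 ≤ c⁻¹ := one_le_of_map_symm_eq_smul ν hne hA hA' hinv hlat
    (Measure.map_symm_eq_inv_smul (e := A.toEquiv) hA.measurable hA'.measurable hc0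
      ENNReal.coe_ne_top hc)
  rw [hc, le_antisymm (ENNReal.one_le_inv.mp hc1) h1c, one_smul]
end

section
/- Suppose ℝ^d = L_1 ⊕ ⋯ ⊕ L_m is a direct sum of nonzero linear subspaces, 1 ≤ k ≤ d, and μ is a finite Borel measure on the Grassmannian Gr(k,d) of k-dimensional subspaces of ℝ^d. Suppose that for each j ∈ {1,…,m} there is an invertible linear map A_j ∈ GL_d(ℝ) acting on each L_i as the scalar λ_{j,i} > 0, with λ_{j,j} > λ_{j,i} for all i ≠ j, such that the induced map W ↦ A_j(W) on Gr(k,d) preserves μ. Then μ is concentrated on the set of subspaces W ∈ Gr(k,d) satisfying W = (W ∩ L_1) ⊕ ⋯ ⊕ (W ∩ L_m). -/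
/-! For a.e. `W`, Poincaré recurrence makes `W` a cluster point of each orbit `A_jⁿ W`. Write
`w ∈ W` as `∑ wᵢ` with `wᵢ ∈ Lᵢ`; then `λ_{j,j}⁻ⁿ A_jⁿ w ∈ A_jⁿ W` tends to `w_j`, because the
other components shrink by the factors `(λ_{j,i}/λ_{j,j})ⁿ → 0`. Since `V ↦ infDist w_j V` is
continuous, `infDist w_j W = 0`, so `w_j ∈ W`: every `W` of this kind contains the components of
its vectors. -/

open MeasureTheory

/-- The topology on the set of linear subspaces of a normed space, induced by the map sending
a subspace to its distance function.  On each Grassmannian of `k`-dimensional subspaces of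
`ℝ^d` this coincides with the standard (compact metrizable) Grassmannian topology. -/
noncomputable instance submoduleTopologicalSpace
    {H : Type*} [NormedAddCommGroup H] [Module ℝ H] :
    TopologicalSpace (Submodule ℝ H) :=
  TopologicalSpace.induced (fun X : Submodule ℝ H => fun h : H => Metric.infDist h (X : Set H))
    inferInstance

/-- The Grassmannian of `k`-dimensional subspaces of `ℝ^d`. -/
abbrev Grass (k d : ℕ) := {W : Submodule ℝ (Fin d → ℝ) // Module.finrank ℝ W = k}

noncomputable instance (k d : ℕ) : MeasurableSpace (Grass k d) := borel _

/-- The action of a linear automorphism of `ℝ^d` on the Grassmannian, `W ↦ A(W)`. -/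
noncomputable def grMap {k d : ℕ} (A : (Fin d → ℝ) ≃ₗ[ℝ] (Fin d → ℝ)) (W : Grass k d) :
    Grass k d :=
  ⟨W.1.map (A : (Fin d → ℝ) →ₗ[ℝ] (Fin d → ℝ)), by
    rw [LinearEquiv.finrank_map_eq]; exact W.2⟩

open Metric Filter Topology

section InfDistTopology

variable {H : Type*} [NormedAddCommGroup H] [Module ℝ H]

theorem continuous_infDist_submodule (h : H) :
    Continuous fun X : Submodule ℝ H => infDist h (X : Set H) :=
  (continuous_apply h).comp (continuous_induced_dom (t := Pi.topologicalSpace)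
    (f := fun (X : Submodule ℝ H) (h : H) => infDist h (X : Set H)))

/-- Since `x ↦ infDist x s` is `1`-Lipschitz uniformly in `s`, continuity of `infDist` at the
points of a dense set gives continuity at every point, as a uniform limit. -/
theorem continuous_infDist_of_denseRange {X : Type*} [TopologicalSpace X] {E : Type*}
    [PseudoMetricSpace E] {s : X → Set E} {u : ℕ → E} (hu : DenseRange u)
    (hcont : ∀ n, Continuous fun x => infDist (u n) (s x)) (y : E) :
    Continuous fun x => infDist y (s x) := by
  refine continuous_of_uniform_approx_of_continuous fun V hV => ?_
  obtain ⟨ε, hε, hεV⟩ := uniformity_basis_dist.mem_iff.1 hV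
  obtain ⟨n, hn⟩ := hu.exists_dist_lt y hε
  refine ⟨_, hcont n, fun x => hεV ?_⟩
  exact ((lipschitz_infDist_pt (s := s x)).dist_le_mul y (u n)).trans_lt
    (by rwa [NNReal.coe_one, one_mul])

instance [TopologicalSpace.SeparableSpace H] : SecondCountableTopology (Submodule ℝ H) := by
  obtain ⟨u, hu⟩ := TopologicalSpace.exists_dense_seq H
  let F : Submodule ℝ H → ℕ → ℝ := fun X n => infDist (u n) (X : Set H)
  suffices Topology.IsInducing F from this.secondCountableTopology
  refine ⟨le_antisymm (continuous_iff_le_induced.1 ?_) (continuous_iff_le_induced.1 ?_)⟩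
  · exact continuous_pi fun n => continuous_infDist_submodule (u n)
  · let _ : TopologicalSpace (Submodule ℝ H) := .induced F inferInstance
    exact continuous_pi <| continuous_infDist_of_denseRange hu fun n =>
      (continuous_apply n).comp (continuous_induced_dom (f := F))

theorem Submodule.mem_of_mapClusterPt {W : Submodule ℝ H} (hW : IsClosed (W : Set H))
    {V : ℕ → Submodule ℝ H} (hWV : MapClusterPt W atTop V) {v : ℕ → H} (hv : ∀ n, v n ∈ V n)
    {x : H} (hx : Tendsto v atTop (𝓝 x)) : x ∈ W := by
  have hdist : Tendsto (fun n => infDist x (V n : Set H)) atTop (𝓝 0) :=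
    squeeze_zero (fun _ => infDist_nonneg) (fun n => infDist_le_dist_of_mem (hv n))
      (tendsto_iff_dist_tendsto_zero.1 hx |>.congr fun _ => dist_comm _ _)
  have hcl : MapClusterPt (infDist x (W : Set H)) atTop fun n => infDist x (V n : Set H) :=
    hWV.continuousAt_comp (f := fun X : Submodule ℝ H => infDist x (X : Set H))
      (continuous_infDist_submodule x).continuousAt
  have hzero : infDist x (W : Set H) = 0 := by
    by_contra hne
    exact (ClusterPt.mono hcl hdist).neBot.ne (disjoint_iff.1 (disjoint_nhds_nhds.2 hne))
  exact (hW.mem_iff_infDist_zero ⟨0, W.zero_mem⟩).2 hzero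

end InfDistTopology

/-- Poincaré recurrence for a map that preserves a finite measure but is not assumed measurable:
it agrees a.e. with a measurable map, and a.e. orbits of the two maps coincide. -/
theorem ae_mapClusterPt_iterate_of_map_eq {α : Type*} [TopologicalSpace α] [MeasurableSpace α]
    [SecondCountableTopology α] [OpensMeasurableSpace α] {μ : Measure α} [IsFiniteMeasure μ]
    {f : α → α} (hf : μ.map f = μ) : ∀ᵐ x ∂μ, MapClusterPt x atTop fun n => f^[n] x := by
  rcases eq_or_ne μ 0 with rfl | hμ
  · simp
  have hfm : AEMeasurable f μ := by
    by_contra h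
    exact hμ (hf.symm.trans (Measure.map_of_not_aemeasurable h))
  set g := hfm.mk f
  have hg : MeasurePreserving g μ μ :=
    ⟨hfm.measurable_mk, by rwa [← Measure.map_congr hfm.ae_eq_mk]⟩
  have horbit : ∀ᵐ x ∂μ, ∀ n, f^[n] x = g^[n] x := by
    have hstep : ∀ᵐ x ∂μ, ∀ n, f (g^[n] x) = g (g^[n] x) :=
      ae_all_iff.2 fun n => (hg.iterate n).quasiMeasurePreserving.ae hfm.ae_eq_mk
    filter_upwards [hstep] with x hx n
    induction n with
    | zero => rfl
    | succ n ih => rw [Function.iterate_succ_apply', Function.iterate_succ_apply', ih, hx]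
  filter_upwards [hg.conservative.ae_frequently_mem_of_mem_nhds, horbit] with x hx hxf
  simpa only [mapClusterPt_iff_frequently, hxf] using hx

theorem tendsto_inv_pow_smul_pow_apply_sum {E : Type*} [AddCommGroup E] [Module ℝ E]
    [TopologicalSpace E] [IsTopologicalAddGroup E] [ContinuousSMul ℝ E] {ι : Type*} [Fintype ι]
    (f : Module.End ℝ E) (c : ι → ℝ) (x : ι → E) (hx : ∀ i, f (x i) = c i • x i) {j : ι}
    (hcj : c j ≠ 0) (hc : ∀ i ≠ j, |c i| < |c j|) :
    Tendsto (fun n => (c j)⁻¹ ^ n • (f ^ n) (∑ i, x i)) atTop (𝓝 (x j)) := by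
  classical
  have hpow : ∀ i n, (f ^ n) (x i) = c i ^ n • x i := by
    intro i n
    induction n with
    | zero => simp
    | succ n ih => rw [pow_succ', Module.End.mul_apply, ih, map_smul, hx, smul_smul, pow_succ]
  have hterm : ∀ i, Tendsto (fun n => (c i / c j) ^ n • x i) atTop
      (𝓝 (if i = j then x j else 0)) := by
    intro i
    split_ifs with hij
    · subst hij
      simpa [div_self hcj] using tendsto_const_nhds
    · have hlt : |c i / c j| < 1 := by
        rw [abs_div, div_lt_one (abs_pos.2 hcj)]
        exact hc i hij
      simpa using (tendsto_pow_atTop_nhds_zero_of_abs_lt_one hlt).smul_const (x i)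
  have hsum := tendsto_finsetSum Finset.univ fun i _ => hterm i
  rw [Finset.sum_ite_eq' Finset.univ j, if_pos (Finset.mem_univ j)] at hsum
  refine hsum.congr fun n => ?_
  simp only [map_sum, hpow, Finset.smul_sum, smul_smul, div_eq_inv_mul, mul_pow]

theorem Submodule.exists_sum_eq_of_mem_iSup {R M ι : Type*} [Semiring R] [AddCommMonoid M]
    [Module R M] [Fintype ι] {p : ι → Submodule R M} {x : M} (hx : x ∈ ⨆ i, p i) :
    ∃ y : ι → M, (∀ i, y i ∈ p i) ∧ ∑ i, y i = x := by
  classical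
  obtain ⟨y, rfl⟩ :=
    (Submodule.mem_iSup_finset_iff_exists_sum (s := Finset.univ) p x).1 (by simpa using hx)
  exact ⟨fun i => y i, fun i => (y i).2, rfl⟩

instance (k d : ℕ) : SecondCountableTopology (Grass k d) :=
  Topology.IsInducing.subtypeVal.secondCountableTopology

instance (k d : ℕ) : BorelSpace (Grass k d) := ⟨rfl⟩

theorem grMap_iterate_coe {k d : ℕ} (B : (Fin d → ℝ) ≃ₗ[ℝ] (Fin d → ℝ)) (n : ℕ) (W : Grass k d) :
    ((grMap B)^[n] W).1 = W.1.map ((B : Module.End ℝ (Fin d → ℝ)) ^ n) := by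
  induction n with
  | zero => simp [Module.End.one_eq_id, Submodule.map_id]
  | succ n ih =>
    rw [Function.iterate_succ_apply', pow_succ', Module.End.mul_eq_comp, Submodule.map_comp, ← ih]
    rfl

theorem Grass.mem_of_mapClusterPt_iterate {k d : ℕ} {B : (Fin d → ℝ) ≃ₗ[ℝ] (Fin d → ℝ)}
    {W : Grass k d} (hW : MapClusterPt W atTop fun n => (grMap B)^[n] W) {w : Fin d → ℝ}
    (hw : w ∈ W.1) {c : ℕ → ℝ} {x : Fin d → ℝ}
    (hx : Tendsto (fun n => c n • ((B : Module.End ℝ (Fin d → ℝ)) ^ n) w) atTop (𝓝 x)) :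
    x ∈ W.1 := by
  refine Submodule.mem_of_mapClusterPt (Submodule.closed_of_finiteDimensional W.1)
    (hW.continuousAt_comp continuous_subtype_val.continuousAt) (fun n => ?_) hx
  rw [Function.comp_apply, grMap_iterate_coe]
  exact Submodule.smul_mem _ _ (Submodule.mem_map_of_mem hw)

theorem grassmannian_invariant_measure_concentrated_on_split_subspaces_general
    {d m k : ℕ}
    (L : Fin m → Submodule ℝ (Fin d → ℝ))
    (hsup : ⨆ i, L i = ⊤)
    (μ : Measure (Grass k d)) (hfin : IsFiniteMeasure μ)
    (A : Fin m → ((Fin d → ℝ) ≃ₗ[ℝ] (Fin d → ℝ))) (lam : Fin m → Fin m → ℝ)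
    (hpos : ∀ j i, 0 < lam j i)
    (hscal : ∀ j i, ∀ v ∈ L i, A j v = lam j i • v)
    (hdom : ∀ j i, i ≠ j → lam j i < lam j j)
    (hinv : ∀ j, μ.map (grMap (A j)) = μ) :
    μ {W : Grass k d | W.1 = ⨆ i, (W.1 ⊓ L i)}ᶜ = 0 := by
  have hrec : ∀ᵐ W ∂μ, ∀ j, MapClusterPt W atTop fun n => (grMap (A j))^[n] W :=
    ae_all_iff.2 fun j => ae_mapClusterPt_iterate_of_map_eq (hinv j)
  rw [Set.compl_ofPred]
  refine ae_iff.1 <| hrec.mono fun W hW =>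
    le_antisymm (fun w hw => ?_) (iSup_le fun _ => inf_le_left)
  obtain ⟨x, hxL, rfl⟩ :=
    Submodule.exists_sum_eq_of_mem_iSup (hsup ▸ Submodule.mem_top : w ∈ ⨆ i, L i)
  have hxW : ∀ j, x j ∈ W.1 := fun j =>
    Grass.mem_of_mapClusterPt_iterate (hW j) hw <|
      tendsto_inv_pow_smul_pow_apply_sum _ (lam j) x (fun i => hscal j i _ (hxL i))
        (hpos j j).ne' fun i hij => by
          rw [abs_of_pos (hpos j i), abs_of_pos (hpos j j)]
          exact hdom j i hij
  exact Submodule.sum_mem _ fun i _ => Submodule.mem_iSup_of_mem i ⟨hxW i, hxL i⟩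

/-- **Furstenberg-type lemma on Grassmannians.**  Let `ℝ^d = L_1 ⊕ ⋯ ⊕ L_m` be a direct sum
of nonzero subspaces and `μ` a finite Borel measure on the Grassmannian `Gr(k,d)`.  Suppose
that for each `j` there is an invertible linear map `A_j` acting on each `L_i` as a positive
scalar `λ_{j,i}`, with `λ_{j,j} > λ_{j,i}` for `i ≠ j`, whose induced map on `Gr(k,d)`
preserves `μ`.  Then `μ` is concentrated on subspaces `W` with `W = ⊕_i (W ∩ L_i)`. -/
theorem grassmannian_invariant_measure_concentrated_on_split_subspaces
    {d m k : ℕ} (hk1 : 1 ≤ k) (hkd : k ≤ d)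
    (L : Fin m → Submodule ℝ (Fin d → ℝ))
    (hindep : iSupIndep L) (hsup : ⨆ i, L i = ⊤) (hne : ∀ i, L i ≠ ⊥)
    (μ : Measure (Grass k d)) (hfin : IsFiniteMeasure μ)
    (A : Fin m → ((Fin d → ℝ) ≃ₗ[ℝ] (Fin d → ℝ))) (lam : Fin m → Fin m → ℝ)
    (hpos : ∀ j i, 0 < lam j i)
    (hscal : ∀ j i, ∀ v ∈ L i, A j v = lam j i • v)
    (hdom : ∀ j i, i ≠ j → lam j i < lam j j)
    (hinv : ∀ j, μ.map (grMap (A j)) = μ) :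
    μ {W : Grass k d | W.1 = ⨆ i, (W.1 ⊓ L i)}ᶜ = 0 :=
  grassmannian_invariant_measure_concentrated_on_split_subspaces_general L hsup μ hfin A lam hpos
    hscal hdom hinv
end

section
/- Let V and W be finite-dimensional real vector spaces, and let X ⊆ Hom_ℝ(V,W) be a linear subspace such that A ∘ T ∘ B^{-1} ∈ X for all T ∈ X, A ∈ SL(V), and B ∈ SL(W). Then X = {0} or X = Hom_ℝ(V,W). -/
open Module Submodule

section SpanAux

variable {V : Type*} [AddCommGroup V] [Module ℝ V]

lemma aux_mem_span {x y : V} (hx : x ≠ 0) (h : x ∈ span ℝ ({x - y} : Set V)) :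
    y ∈ span ℝ ({x} : Set V) := by
  obtain ⟨t, ht⟩ := mem_span_singleton.1 h
  have htne : t ≠ 0 := by
    rintro rfl
    simp only [zero_smul] at ht
    exact hx ht.symm
  rw [smul_sub] at ht
  have h1 : t • y = t • x - x := by rw [sub_eq_iff_eq_add.1 ht]; abel
  have hy : y = t⁻¹ • (t • x - x) := by
    rw [← h1, smul_smul, inv_mul_cancel₀ htne, one_smul]
  rw [hy]
  exact smul_mem _ _ (sub_mem (smul_mem _ _ (mem_span_singleton_self x))
    (mem_span_singleton_self x))

lemma aux_notMem_span {x z : V} (hx : x ≠ 0) (hz : z ∉ span ℝ ({x} : Set V)) :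
    x ∉ span ℝ ({x - z} : Set V) :=
  fun h => hz (aux_mem_span hx h)

lemma aux_notMem_span' {x z y : V} (hy : y ≠ 0) (hyx : y ∈ span ℝ ({x} : Set V))
    (hz : z ∉ span ℝ ({x} : Set V)) : z ∉ span ℝ ({z - y} : Set V) := by
  intro h
  have hz0 : z ≠ 0 := fun h0 => hz (h0 ▸ zero_mem _)
  have hyz : y ∈ span ℝ ({z} : Set V) := aux_mem_span hz0 h
  obtain ⟨b, hb⟩ := mem_span_singleton.1 hyz
  have hb0 : b ≠ 0 := by rintro rfl; simp at hb; exact hy hb.symm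
  obtain ⟨a, ha⟩ := mem_span_singleton.1 hyx
  apply hz
  rw [mem_span_singleton]
  exact ⟨b⁻¹ * a, by rw [mul_smul, ha, ← hb, smul_smul, inv_mul_cancel₀ hb0, one_smul]⟩

end SpanAux

open Module Submodule

section Shear

variable {V : Type*} [AddCommGroup V] [Module ℝ V] [FiniteDimensional ℝ V]

lemma det_one_add_smulRight (g : V →ₗ[ℝ] ℝ) (v : V) (hgv : g v = 0) :
    LinearMap.det (LinearMap.id + g.smulRight v) = 1 := by
  classical
  let b := Module.finBasis ℝ V
  rw [← LinearMap.det_toMatrix b]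
  have hM : LinearMap.toMatrix b b (LinearMap.id + g.smulRight v)
      = 1 + (Matrix.of fun i (_ : Fin 1) => b.repr v i) *
          (Matrix.of fun (_ : Fin 1) j => g (b j)) := by
    ext i j
    simp [LinearMap.toMatrix_apply, Matrix.mul_apply, Matrix.one_apply,
      Finsupp.single_apply, mul_comm, eq_comm]
  rw [hM, Matrix.det_one_add_mul_comm, Matrix.det_fin_one]
  have hsum : ∑ j, g (b j) * b.repr v j = g v := by
    conv_rhs => rw [← b.sum_repr v]
    rw [map_sum]
    simp [mul_comm]
  simp [Matrix.add_apply, Matrix.mul_apply, hsum, hgv]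

lemma exists_shear (g : V →ₗ[ℝ] ℝ) (v : V) (hgv : g v = 0) :
    ∃ E : V ≃ₗ[ℝ] V, LinearMap.det (E : V →ₗ[ℝ] V) = 1 ∧
      LinearMap.det (E.symm : V →ₗ[ℝ] V) = 1 ∧ ∀ u, E u = u + g u • v := by
  have hcomp : ∀ (h : V →ₗ[ℝ] ℝ), h v = 0 →
      (LinearMap.id + h.smulRight v) ∘ₗ (LinearMap.id + (-h).smulRight v) = LinearMap.id := by
    intro h hh
    ext u
    simp [LinearMap.smulRight_apply, hh, smul_smul, mul_comm]
  refine ⟨LinearEquiv.ofLinear (LinearMap.id + g.smulRight v)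
      (LinearMap.id + (-g).smulRight v)
      (hcomp g hgv) ?_, ?_, ?_, ?_⟩
  · have := hcomp (-g) (by simp [hgv])
    simpa using this
  · exact det_one_add_smulRight g v hgv
  · exact det_one_add_smulRight (-g) v (by simp [hgv])
  · intro u; simp [LinearEquiv.ofLinear_apply]

end Shear

section Trans

variable {V : Type*} [AddCommGroup V] [Module ℝ V] [FiniteDimensional ℝ V]

omit [FiniteDimensional ℝ V] in
lemma exists_notMem_span_of_two_le {x : V} (hx : x ≠ 0) (h2 : 2 ≤ Module.finrank ℝ V) :
    ∃ z, z ∉ span ℝ ({x} : Set V) := by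
  by_contra hc
  push_neg at hc
  have htop : span ℝ ({x} : Set V) = ⊤ := eq_top_iff'.2 hc
  have h1 : Module.finrank ℝ V = 1 := by
    calc Module.finrank ℝ V = Module.finrank ℝ (⊤ : Submodule ℝ V) := (finrank_top ℝ V).symm
    _ = Module.finrank ℝ (span ℝ ({x} : Set V)) := by rw [htop]
    _ = 1 := finrank_span_singleton hx
  omega

lemma vec_step {x y : V} (h : x ∉ span ℝ ({x - y} : Set V)) :
    ∃ A : V ≃ₗ[ℝ] V, LinearMap.det (A : V →ₗ[ℝ] V) = 1 ∧ A x = y := by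
  obtain ⟨g, hgx, hker⟩ := Submodule.exists_dual_map_eq_bot_of_notMem h inferInstance
  have hgxy : g (x - y) = 0 := by
    have hm : g (x - y) ∈ (span ℝ ({x - y} : Set V)).map g :=
      mem_map_of_mem (mem_span_singleton_self _)
    rw [hker] at hm
    simpa using hm
  set g' : V →ₗ[ℝ] ℝ := (g x)⁻¹ • g with hg'
  have hg'yx : g' (y - x) = 0 := by
    have : g (y - x) = 0 := by
      have : g (x - y) = - g (y - x) := by rw [← map_neg]; congr 1; abel
      rw [this] at hgxy; linarith
    simp [hg', this]
  have hg'x : g' x = 1 := by simp [hg', inv_mul_cancel₀ hgx]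
  obtain ⟨E, hE1, _, hEu⟩ := exists_shear g' (y - x) hg'yx
  refine ⟨E, hE1, ?_⟩
  rw [hEu x, hg'x, one_smul]
  abel

lemma vec_trans {x y : V} (hx : x ≠ 0) (hy : y ≠ 0) :
    ∃ (A : V ≃ₗ[ℝ] V) (c : ℝ), c ≠ 0 ∧ LinearMap.det (A : V →ₗ[ℝ] V) = 1 ∧ A x = c • y := by
  by_cases hdim : Module.finrank ℝ V ≤ 1
  · have hxtop : span ℝ ({x} : Set V) = ⊤ := by
      apply Submodule.eq_top_of_finrank_eq
      have h1 : finrank ℝ (span ℝ ({x} : Set V)) = 1 := finrank_span_singleton hx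
      have h2 : finrank ℝ (span ℝ ({x} : Set V)) ≤ finrank ℝ V := (span ℝ {x}).finrank_le
      omega
    have : y ∈ span ℝ ({x} : Set V) := hxtop ▸ mem_top
    obtain ⟨d, hd⟩ := mem_span_singleton.1 this
    have hd0 : d ≠ 0 := by rintro rfl; simp at hd; exact hy hd.symm
    refine ⟨LinearEquiv.refl ℝ V, d⁻¹, inv_ne_zero hd0, by simp, ?_⟩
    simp [← hd, smul_smul, inv_mul_cancel₀ hd0]
  · push_neg at hdim
    by_cases hxy : x ∈ span ℝ ({x - y} : Set V)
    · have hyx : y ∈ span ℝ ({x} : Set V) := aux_mem_span hx hxy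
      obtain ⟨z, hz⟩ := exists_notMem_span_of_two_le hx hdim
      obtain ⟨A₁, hA₁d, hA₁⟩ := vec_step (aux_notMem_span hx hz)
      obtain ⟨A₂, hA₂d, hA₂⟩ := vec_step (aux_notMem_span' hy hyx hz)
      refine ⟨A₁.trans A₂, 1, one_ne_zero, ?_, ?_⟩
      · rw [LinearEquiv.coe_trans, LinearMap.det_comp, hA₁d, hA₂d, mul_one]
      · simp only [LinearEquiv.trans_apply, hA₁, hA₂, one_smul]
    · obtain ⟨A, hAd, hA⟩ := vec_step hxy
      exact ⟨A, 1, one_ne_zero, hAd, by rw [hA, one_smul]⟩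

lemma dual_step {f g : V →ₗ[ℝ] ℝ} (h : f ∉ span ℝ ({f - g} : Set (V →ₗ[ℝ] ℝ))) :
    ∃ A : V ≃ₗ[ℝ] V, LinearMap.det (A : V →ₗ[ℝ] V) = 1 ∧
      f ∘ₗ (A.symm : V →ₗ[ℝ] V) = g := by
  obtain ⟨v, hv1, hv2⟩ : ∃ v, (f - g) v = 0 ∧ f v ≠ 0 := by
    by_contra hc
    push_neg at hc
    apply h
    have hker : ⨅ _ : Fin 1, LinearMap.ker (f - g) ≤ LinearMap.ker f := by
      rw [iInf_const]
      intro u hu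
      exact hc u hu
    have := FiniteDimensional.mem_span_of_iInf_ker_le_ker (L := fun _ : Fin 1 => f - g) hker
    simpa [Set.range_const] using this
  set v' : V := (f v)⁻¹ • v with hv'
  have hfv' : f v' = 1 := by simp [hv', inv_mul_cancel₀ hv2]
  have hgv' : g v' = 1 := by
    have : f v = g v := by
      have := hv1; simp only [LinearMap.sub_apply, sub_eq_zero] at this; exact this
    simp [hv', ← this, inv_mul_cancel₀ hv2]
  obtain ⟨E, _, hE2, hEu⟩ := exists_shear (g - f) v' (by simp [hgv', hfv'])
  refine ⟨E.symm, hE2, ?_⟩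
  rw [LinearEquiv.symm_symm]
  ext u
  simp only [LinearMap.comp_apply, LinearEquiv.coe_coe, hEu u, map_add, map_smul,
    LinearMap.sub_apply, smul_eq_mul, hfv']
  ring

lemma dual_trans {f g : V →ₗ[ℝ] ℝ} (hf : f ≠ 0) (hg : g ≠ 0) :
    ∃ (A : V ≃ₗ[ℝ] V) (c : ℝ), c ≠ 0 ∧ LinearMap.det (A : V →ₗ[ℝ] V) = 1 ∧
      f ∘ₗ (A.symm : V →ₗ[ℝ] V) = c • g := by
  by_cases hdim : Module.finrank ℝ V ≤ 1
  · have hdual : Module.finrank ℝ (V →ₗ[ℝ] ℝ) ≤ 1 :=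
      le_trans (le_of_eq (Subspace.dual_finrank_eq (K := ℝ) (V := V))) hdim
    have hftop : span ℝ ({f} : Set (V →ₗ[ℝ] ℝ)) = ⊤ := by
      apply Submodule.eq_top_of_finrank_eq
      have h1 := finrank_span_singleton (K := ℝ) hf
      have h2 := (span ℝ ({f} : Set (V →ₗ[ℝ] ℝ))).finrank_le
      omega
    have : g ∈ span ℝ ({f} : Set (V →ₗ[ℝ] ℝ)) := hftop ▸ mem_top
    obtain ⟨d, hd⟩ := mem_span_singleton.1 this
    have hd0 : d ≠ 0 := by rintro rfl; simp at hd; exact hg hd.symm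
    refine ⟨LinearEquiv.refl ℝ V, d⁻¹, inv_ne_zero hd0, by simp, ?_⟩
    ext u
    simp [← hd, smul_smul, inv_mul_cancel₀ hd0]
  · push_neg at hdim
    have hdual : 2 ≤ Module.finrank ℝ (V →ₗ[ℝ] ℝ) :=
      le_trans hdim (le_of_eq (Subspace.dual_finrank_eq (K := ℝ) (V := V)).symm)
    by_cases hfg : f ∈ span ℝ ({f - g} : Set (V →ₗ[ℝ] ℝ))
    · have hgf : g ∈ span ℝ ({f} : Set (V →ₗ[ℝ] ℝ)) := aux_mem_span hf hfg
      obtain ⟨φ, hφ⟩ := exists_notMem_span_of_two_le hf hdual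
      obtain ⟨A₁, hA₁d, hA₁⟩ := dual_step (aux_notMem_span hf hφ)
      obtain ⟨A₂, hA₂d, hA₂⟩ := dual_step (aux_notMem_span' hg hgf hφ)
      refine ⟨A₁.trans A₂, 1, one_ne_zero, ?_, ?_⟩
      · rw [LinearEquiv.coe_trans, LinearMap.det_comp, hA₁d, hA₂d, mul_one]
      · rw [one_smul]
        have : ((A₁.trans A₂).symm : V →ₗ[ℝ] V)
            = (A₁.symm : V →ₗ[ℝ] V) ∘ₗ (A₂.symm : V →ₗ[ℝ] V) := by
          ext u; simp
        rw [this, ← LinearMap.comp_assoc, hA₁, hA₂]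
    · obtain ⟨A, hAd, hA⟩ := dual_step hfg
      exact ⟨A, 1, one_ne_zero, hAd, by rw [hA, one_smul]⟩

end Trans



/-- **`SL(V) × SL(W)`-invariant subspaces of `Hom(V,W)` are trivial.**  If a subspace
`X ⊆ Hom_ℝ(V,W)` satisfies `B ∘ T ∘ A⁻¹ ∈ X` for all `T ∈ X` and all `A ∈ SL(V)`,
`B ∈ SL(W)`, then `X = 0` or `X = Hom_ℝ(V,W)`. -/
theorem invariant_subspace_of_hom_trivial
    {V W : Type*} [AddCommGroup V] [Module ℝ V] [FiniteDimensional ℝ V]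
    [AddCommGroup W] [Module ℝ W] [FiniteDimensional ℝ W]
    (X : Submodule ℝ (V →ₗ[ℝ] W))
    (hX : ∀ T ∈ X, ∀ (A : V ≃ₗ[ℝ] V) (B : W ≃ₗ[ℝ] W),
      LinearMap.det (A : V →ₗ[ℝ] V) = 1 → LinearMap.det (B : W →ₗ[ℝ] W) = 1 →
      (B : W →ₗ[ℝ] W) ∘ₗ T ∘ₗ (A.symm : V →ₗ[ℝ] V) ∈ X) :
    X = ⊥ ∨ X = ⊤ := by
  classical
  by_cases hbot : X = ⊥
  · exact Or.inl hbot
  right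
  obtain ⟨T, hTX, hT0⟩ := (Submodule.ne_bot_iff X).1 hbot
  set b := Module.finBasis ℝ V with hb
  have hsum : ∀ S : V →ₗ[ℝ] W, S = ∑ i, (b.coord i).smulRight (S (b i)) := by
    intro S
    ext u
    rw [LinearMap.sum_apply]
    simp only [LinearMap.smulRight_apply, Basis.coord_apply]
    conv_lhs => rw [← b.sum_repr u]
    rw [map_sum]
    simp
  -- extract a nonzero rank-one element of X
  have key : ∃ f : V →ₗ[ℝ] ℝ, f ≠ 0 ∧ ∃ w : W, w ≠ 0 ∧ f.smulRight w ∈ X := by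
    obtain ⟨v, hv⟩ : ∃ v, T v ≠ 0 := by
      by_contra hc
      push_neg at hc
      exact hT0 (by ext u; simp [hc u])
    have hv0 : v ≠ 0 := fun h0 => hv (by rw [h0, map_zero])
    haveI : Nontrivial V := ⟨v, 0, hv0⟩
    by_cases hdim : Module.finrank ℝ V ≤ 1
    · have h1 : Module.finrank ℝ V = 1 :=
        le_antisymm hdim Module.finrank_pos
      haveI hss : Subsingleton (Fin (Module.finrank ℝ V)) := by
        rw [h1]; infer_instance
      let i₀ : Fin (Module.finrank ℝ V) := ⟨0, by omega⟩
      have hall : ∀ j : Fin (Module.finrank ℝ V), j = i₀ := fun j => Subsingleton.elim j i₀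
      have hTr : T = (b.coord i₀).smulRight (T (b i₀)) :=
        (hsum T).trans (Fintype.sum_eq_single i₀ (fun j hj => absurd (hall j) hj))
      refine ⟨b.coord i₀, ?_, T (b i₀), ?_, hTr ▸ hTX⟩
      · intro h0
        have := congrArg (fun φ : V →ₗ[ℝ] ℝ => φ (b i₀)) h0
        simp [Basis.coord_apply] at this
      · intro h0
        rw [h0] at hTr
        
        exact hT0 (by rw [hTr]; ext u; simp)
    · push_neg at hdim
      obtain ⟨z, hz⟩ := exists_notMem_span_of_two_le hv0 hdim
      obtain ⟨g, hgz, hker⟩ := Submodule.exists_dual_map_eq_bot_of_notMem hz inferInstance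
      have hgv : g v = 0 := by
        have hm : g v ∈ (span ℝ ({v} : Set V)).map g :=
          mem_map_of_mem (mem_span_singleton_self v)
        rw [hker] at hm
        simpa using hm
      have hg0 : g ≠ 0 := fun h0 => hgz (by rw [h0]; simp)
      obtain ⟨E, hE1, hE2, hEu⟩ := exists_shear g v hgv
      have h0 := hX T hTX E.symm (LinearEquiv.refl ℝ W) hE2 (by simp)
      have hTE : T ∘ₗ (E : V →ₗ[ℝ] V) ∈ X := by simpa using h0
      have hsub : T ∘ₗ (E : V →ₗ[ℝ] V) - T ∈ X := X.sub_mem hTE hTX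
      have heq : T ∘ₗ (E : V →ₗ[ℝ] V) - T = g.smulRight (T v) := by
        ext u
        simp [hEu u, map_add, map_smul]
      exact ⟨g, hg0, T v, hv, heq ▸ hsub⟩
  obtain ⟨f₀, hf₀, w₀, hw₀, hmem⟩ := key
  have hrank1 : ∀ (f : V →ₗ[ℝ] ℝ) (w : W), f.smulRight w ∈ X := by
    intro f w
    by_cases hf : f = 0
    · have : f.smulRight w = 0 := by ext u; simp [hf]
      rw [this]; exact X.zero_mem
    by_cases hw : w = 0
    · have : f.smulRight w = 0 := by ext u; simp [hw]
      rw [this]; exact X.zero_mem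
    obtain ⟨A, c₁, hc₁, hdA, hAf⟩ := dual_trans hf₀ hf
    obtain ⟨B, c₂, hc₂, hdB, hBw⟩ := vec_trans hw₀ hw
    have h1 := hX _ hmem A B hdA hdB
    have h2 : (B : W →ₗ[ℝ] W) ∘ₗ (f₀.smulRight w₀) ∘ₗ (A.symm : V →ₗ[ℝ] V)
        = (c₁ * c₂) • f.smulRight w := by
      ext u
      have hfu : f₀ (A.symm u) = c₁ * f u := by
        have := congrArg (fun φ : V →ₗ[ℝ] ℝ => φ u) hAf
        simpa using this
      simp only [LinearMap.comp_apply, LinearEquiv.coe_coe, LinearMap.smulRight_apply,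
        LinearMap.smul_apply, map_smul, hfu, hBw]
      rw [smul_smul, smul_smul]
      congr 1
      ring
    rw [h2] at h1
    have h3 := X.smul_mem (c₁ * c₂)⁻¹ h1
    rwa [smul_smul, inv_mul_cancel₀ (mul_ne_zero hc₁ hc₂), one_smul] at h3
  rw [eq_top_iff]
  intro S _
  rw [hsum S]
  exact Submodule.sum_mem X fun i _ => hrank1 _ _
end

section
/- Let d ≥ 1 and let Λ ⊆ ℤ^d be a finite-index subgroup such that MΛ = Λ for every M ∈ SL_d(ℤ). Then Λ = (nℤ)^d for some integer n ≥ 1. -/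
lemma transvection_mulVec_aux {d : ℕ} (i j : Fin d) (c : ℤ) (v : Fin d → ℤ) :
    (Matrix.transvection i j c).mulVec v = v + Pi.single i (c * v j) := by
  have h : (Matrix.single i j c).mulVec v = Pi.single i (c * v j) := by
    funext k
    simp only [Matrix.mulVec, dotProduct, Matrix.single, Matrix.of_apply]
    rw [Finset.sum_eq_single j]
    · rcases eq_or_ne i k with rfl | hk <;> simp [Pi.single_apply, eq_comm, *]
    · intro b _ hb; simp [hb.symm]
    · simp
  simp [Matrix.transvection, Matrix.add_mulVec, h, Matrix.smul_mulVec]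

/-- **`SL_d(ℤ)`-invariant finite-index subgroups of `ℤ^d`.**  If `Λ ≤ ℤ^d` has finite index
and satisfies `MΛ = Λ` for every `M ∈ SL_d(ℤ)`, then `Λ = (nℤ)^d` for some `n ≥ 1`. -/
theorem sl_invariant_finite_index_subgroup_eq_nZd
    {d : ℕ} (hd : 1 ≤ d) (Λ : AddSubgroup (Fin d → ℤ)) (hfin : Λ.index ≠ 0)
    (hinv : ∀ M : Matrix.SpecialLinearGroup (Fin d) ℤ, ∀ v : Fin d → ℤ,
      v ∈ Λ ↔ (M : Matrix (Fin d) (Fin d) ℤ).mulVec v ∈ Λ) :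
    ∃ n : ℕ, 1 ≤ n ∧ ∀ v : Fin d → ℤ, v ∈ Λ ↔ ∀ i, (n : ℤ) ∣ v i := by
  classical
  haveI : Λ.FiniteIndex := ⟨hfin⟩
  have i₀ : Fin d := ⟨0, hd⟩
  -- key: transvection invariance
  have key : ∀ i j : Fin d, i ≠ j → ∀ c : ℤ, ∀ v : Fin d → ℤ, v ∈ Λ →
      v + Pi.single i (c * v j) ∈ Λ := by
    intro i j hij c v hv
    have hM : (Matrix.transvection i j c).det = 1 := Matrix.det_transvection_of_ne i j hij c
    have := (hinv ⟨Matrix.transvection i j c, hM⟩ v).mp hv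
    rwa [transvection_mulVec_aux] at this
  -- single i (v j) ∈ Λ for v ∈ Λ, i ≠ j
  have h1 : ∀ v ∈ Λ, ∀ i j : Fin d, i ≠ j → Pi.single i (v j) ∈ Λ := by
    intro v hv i j hij
    have h := key i j hij 1 v hv
    have := Λ.sub_mem h hv
    simpa using this
  -- move singles between coordinates
  have h2 : ∀ (a : ℤ) (i j : Fin d), Pi.single i a ∈ Λ → Pi.single j a ∈ Λ := by
    intro a i j h
    rcases eq_or_ne j i with rfl | hji
    · exact h
    · have := h1 _ h j i hji
      simpa using this
  -- the subgroup of ℤ of possible coordinates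
  set S : AddSubgroup ℤ := Λ.comap (AddMonoidHom.single (fun _ : Fin d => ℤ) i₀) with hS
  obtain ⟨g, hg⟩ := Int.subgroup_cyclic S
  have hmemS : ∀ a : ℤ, a ∈ S ↔ g ∣ a := by
    intro a
    rw [hg, ← AddSubgroup.zmultiples_eq_closure, Int.mem_zmultiples_iff]
  have hmem : ∀ a : ℤ, Pi.single i₀ a ∈ Λ ↔ g ∣ a := fun a => hmemS a
  -- g ≠ 0
  have hidx : Pi.single i₀ (Λ.index : ℤ) ∈ Λ := by
    have := AddSubgroup.nsmul_index_mem Λ (Pi.single i₀ (1 : ℤ))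
    rw [← Pi.single_smul] at this
    simpa using this
  have hg0 : g ≠ 0 := by
    intro h0
    have := (hmem _).mp hidx
    rw [h0] at this
    exact hfin (by exact_mod_cast zero_dvd_iff.mp this)
  refine ⟨g.natAbs, Nat.one_le_iff_ne_zero.mpr (by simpa using hg0), ?_⟩
  intro v
  constructor
  · -- forward: v ∈ Λ → all coordinates divisible
    intro hv i
    rw [Int.natCast_natAbs, abs_dvd, ← hmem]
    by_cases hall : ∀ j, j = i
    · -- d = 1 case: v = Pi.single i₀ (v i)
      have hvi : v = Pi.single i₀ (v i) := by
        funext k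
        rw [hall k, hall i₀]
        simp
      rw [← hvi]; exact hv
    · push_neg at hall
      obtain ⟨k, hk⟩ := hall
      exact h2 _ k i₀ (h1 v hv k i hk)
  · -- backward
    intro hdvd
    have hv : v = ∑ i, Pi.single i (v i) := (Finset.univ_sum_single v).symm
    rw [hv]
    refine AddSubgroup.sum_mem Λ fun i _ => ?_
    obtain ⟨c, hc⟩ := (Int.natAbs_dvd.mp (hdvd i) : g ∣ v i)
    have hgi : Pi.single i g ∈ Λ := h2 g i₀ i ((hmem g).mpr dvd_rfl)
    have heq : Pi.single i (v i) = c • (Pi.single i g : Fin d → ℤ) := by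
      rw [← Pi.single_smul, smul_eq_mul, mul_comm, ← hc]
    rw [heq]
    exact AddSubgroup.zsmul_mem Λ hgi c
end
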